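/- For the modified hexagon with two outward circular-arc bulges on adjacent edges and one inward matching dent, in any single surrounding layer of 6 copies around a central copy, some copy in the layer must have an outward bulge protruding into a neighboring copy of the same layer, forcing that neighbor to have its dent on the shared edge. -/
import Mathlib


/-- The type of an edge of the modified hexagon: straight, an outward circular-arc
bulge, or an inward circular-arc dent. -/
inductive HexEdge
  | straight
  | bulge
  | dent
deriving DecidableEq

open HexEdge

/-- Two abutting edges fit together exactly when both are straight, or when a bulge
meets a matching dent. -/
def HexEdge.fits : HexEdge → HexEdge → Prop
  | straight, straight => True
  | bulge, dent => True
  | dent, bulge => True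
  | _, _ => False

/-- The edge pattern of the modified hexagon: outward bulges on two adjacent edges
(positions 0 and 1), an inward dent on one other edge (position 3), and straight
edges elsewhere; edges are indexed cyclically by `ZMod 6`. -/
def hexBase : ZMod 6 → HexEdge := fun i =>
  if i = 0 ∨ i = 1 then bulge else if i = 3 then dent else straight

/-- A placement of a copy of the hexagon is a rotation or a reflection of the cyclic
edge indexing. -/
def IsHexSymmetry (σ : ZMod 6 → ZMod 6) : Prop :=
  (∃ c : ZMod 6, ∀ i, σ i = i + c) ∨ (∃ c : ZMod 6, ∀ i, σ i = c - i)

lemma fits_cases (x y : HexEdge) (hxy : x.fits y) :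
    (x = straight ∧ y = straight) ∨ (x = bulge ∧ y = dent) ∨ (x = dent ∧ y = bulge) := by
  cases x <;> cases y <;> simp_all [HexEdge.fits]

lemma hex_straight : ∀ a : ZMod 6,
    hexBase (a + 1) = straight → hexBase (a - 1) = straight → a = 3 := by decide

/-- For the modified hexagon with two outward bulges on adjacent edges and one matching
inward dent, in any single surrounding layer of 6 copies around a central copy, some
copy of the layer must have an outward bulge protruding into a neighbouring copy of the
same layer, forcing that neighbour to have its dent on the shared edge.

The corona is encoded combinatorially: copy `k` (for `k : ZMod 6`) is placed with
symmetry `σ k`, so its edge at position `i` has type `hexBase (σ k i)`; copy `k` faces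
the central copy (placed with symmetry `σc`) along its edge `h k` (matching the central
copy's edge `k`), and faces its layer-neighbour `k + 1` along its edge `h k + 1`, which
abuts edge `h (k + 1) - 1` of copy `k + 1`. -/
theorem hexagon_layer_forces_bulge_into_neighbor
    (σc : ZMod 6 → ZMod 6) (σ : ZMod 6 → ZMod 6 → ZMod 6) (h : ZMod 6 → ZMod 6)
    (hσc : IsHexSymmetry σc) (hσ : ∀ k, IsHexSymmetry (σ k))
    (hcent : ∀ k : ZMod 6, HexEdge.fits (hexBase (σc k)) (hexBase (σ k (h k))))
    (hside : ∀ k : ZMod 6,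
      HexEdge.fits (hexBase (σ k (h k + 1))) (hexBase (σ (k + 1) (h (k + 1) - 1)))) :
    ∃ k : ZMod 6,
      (hexBase (σ k (h k + 1)) = bulge ∧ hexBase (σ (k + 1) (h (k + 1) - 1)) = dent) ∨
      (hexBase (σ (k + 1) (h (k + 1) - 1)) = bulge ∧
        hexBase (σ k (h k + 1)) = dent) := by
  by_contra hcon
  push_neg at hcon
  have hstr : ∀ k : ZMod 6, hexBase (σ k (h k + 1)) = straight ∧
      hexBase (σ (k + 1) (h (k + 1) - 1)) = straight := by
    intro k
    rcases fits_cases _ _ (hside k) with ⟨h1, h2⟩ | ⟨h1, h2⟩ | ⟨h1, h2⟩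
    · exact ⟨h1, h2⟩
    · exact absurd h2 ((hcon k).1 h1)
    · exact absurd h1 ((hcon k).2 h2)
  have hA : ∀ k : ZMod 6, hexBase (σ k (h k) + 1) = straight ∧
      hexBase (σ k (h k) - 1) = straight := by
    intro k
    have h1 := (hstr k).1
    have h2 := (hstr (k - 1)).2
    rw [sub_add_cancel] at h2
    rcases hσ k with ⟨c, hc⟩ | ⟨c, hc⟩
    · have e1 : σ k (h k + 1) = σ k (h k) + 1 := by rw [hc, hc]; ring
      have e2 : σ k (h k - 1) = σ k (h k) - 1 := by rw [hc, hc]; ring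
      rw [e1] at h1; rw [e2] at h2; exact ⟨h1, h2⟩
    · have e1 : σ k (h k + 1) = σ k (h k) - 1 := by rw [hc, hc]; ring
      have e2 : σ k (h k - 1) = σ k (h k) + 1 := by rw [hc, hc]; ring
      rw [e1] at h1; rw [e2] at h2; exact ⟨h2, h1⟩
  have ha : ∀ k : ZMod 6, σ k (h k) = 3 := fun k => hex_straight _ (hA k).1 (hA k).2
  obtain ⟨k0, hk0⟩ : ∃ k0, σc k0 = 3 := by
    rcases hσc with ⟨c, hc⟩ | ⟨c, hc⟩
    · exact ⟨3 - c, by rw [hc]; ring⟩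
    · exact ⟨c - 3, by rw [hc]; ring⟩
  have := hcent k0
  have h3 : hexBase 3 = dent := by decide
  rw [hk0, ha k0, h3] at this
  simp [HexEdge.fits] at this
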